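/- arXiv:2602.09851 — 5 statements merged into one kernel-verified Lean document; each statement's English description precedes it below -/
import Mathlib

section
/- Budget Equilibrium (Theorem 1): At the terminal iteration m = M, both terminal counts N_FE(M) and N_HPO(M) lie in the set {⌊M/2⌋, ⌈M/2⌉}. -/
/-- Prior weight for FE at iteration `m`: `ω_FE(m) = p₁ − δ·m` with `δ = (p₁ − 0.5)/M`. -/
noncomputable def omegaFE (M : ℕ) (p₁ : ℝ) (m : ℕ) : ℝ :=
  p₁ - ((p₁ - 0.5) / (M : ℝ)) * (m : ℝ)

/-- Prior weight for HPO at iteration `m`: `ω_HPO(m) = p₂ + δ·m` with `p₂ = 1 − p₁`. -/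
noncomputable def omegaHPO (M : ℕ) (p₁ : ℝ) (m : ℕ) : ℝ :=
  (1 - p₁) + ((p₁ - 0.5) / (M : ℝ)) * (m : ℝ)

/-- State function given counts: `Q = ω_FE(m)·(1 + N_HPO) − ω_HPO(m)·(1 + N_FE)`. -/
noncomputable def Qaux (M : ℕ) (p₁ : ℝ) (m NF NH : ℕ) : ℝ :=
  omegaFE M p₁ m * (1 + (NH : ℝ)) - omegaHPO M p₁ m * (1 + (NF : ℝ))

open Classical in
/-- Joint count sequence `(N_FE(m), N_HPO(m))`: start at `(0,0)`; at each step,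
if `Q(m) > 0` then FE is selected (first count increments), otherwise HPO is selected. -/
noncomputable def counts (M : ℕ) (p₁ : ℝ) : ℕ → ℕ × ℕ
  | 0 => (0, 0)
  | m + 1 =>
    let c := counts M p₁ m
    if 0 < Qaux M p₁ m c.1 c.2 then (c.1 + 1, c.2) else (c.1, c.2 + 1)

/-- `N_FE(m)`: number of times FE has been selected up to iteration `m`. -/
noncomputable def NFE (M : ℕ) (p₁ : ℝ) (m : ℕ) : ℕ := (counts M p₁ m).1

/-- `N_HPO(m)`: number of times HPO has been selected up to iteration `m`. -/
noncomputable def NHPO (M : ℕ) (p₁ : ℝ) (m : ℕ) : ℕ := (counts M p₁ m).2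

/-- The state function `Q(m) = ω_FE(m)·(1 + N_HPO(m)) − ω_HPO(m)·(1 + N_FE(m))`. -/
noncomputable def Q (M : ℕ) (p₁ : ℝ) (m : ℕ) : ℝ :=
  Qaux M p₁ m (NFE M p₁ m) (NHPO M p₁ m)

theorem budget_equilibrium (M : ℕ) (hM : 1 ≤ M) (p₁ : ℝ)
    (hp₁ : (0.5 : ℝ) ≤ p₁) (hp₂ : p₁ < ((M : ℝ) + 1.5) / ((M : ℝ) + 3)) :
    NFE M p₁ M ∈ ({M / 2, (M + 1) / 2} : Set ℕ) ∧
    NHPO M p₁ M ∈ ({M / 2, (M + 1) / 2} : Set ℕ) := by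

  have hM1 : (1:ℝ) ≤ (M:ℝ) := by exact_mod_cast hM
  have hMpos : (0:ℝ) < (M:ℝ) := by linarith
  have h3 : (0:ℝ) < (M:ℝ) + 3 := by linarith
  set δ : ℝ := (p₁ - 0.5) / (M:ℝ) with hδdef
  have hδ0 : 0 ≤ δ := div_nonneg (by linarith) hMpos.le
  have hδM : δ * (M:ℝ) = p₁ - 0.5 := by rw [hδdef]; field_simp
  have hp₂' : p₁ * ((M:ℝ)+3) < (M:ℝ) + 1.5 := by
    rw [lt_div_iff₀ h3] at hp₂; linarith
  have hδub : δ * (2*(M:ℝ)+6) < 1 := by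
    have h1 : δ * (2*(M:ℝ)+6) * (M:ℝ) = (p₁ - 0.5) * (2*(M:ℝ)+6) := by
      rw [hδdef]; field_simp
    nlinarith [mul_pos hMpos h3]
  have hp1lt : p₁ < 1 := by nlinarith
  -- the target sequence
  set g : ℕ → ℝ := fun m => (p₁ - δ*(m:ℝ))*((m:ℝ)+2) - 1 with hg
  -- sum of counts
  have hsum : ∀ m, (counts M p₁ m).1 + (counts M p₁ m).2 = m := by
    intro m
    induction m with
    | zero => simp [counts]
    | succ n ih =>
      rw [counts]
      split <;> simp <;> omega
  -- Q in terms of g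
  have hQ : ∀ m, Q M p₁ m = g m - ((counts M p₁ m).1 : ℝ) := by
    intro m
    have h := hsum m
    have hcast : ((counts M p₁ m).2 : ℝ) = (m:ℝ) - ((counts M p₁ m).1 : ℝ) := by
      have h2 : ((counts M p₁ m).1 : ℝ) + ((counts M p₁ m).2 : ℝ) = (m:ℝ) := by
        exact_mod_cast congrArg (Nat.cast : ℕ → ℝ) h
      linarith
    show Qaux M p₁ m (counts M p₁ m).1 (counts M p₁ m).2 = _
    unfold Qaux omegaFE omegaHPO
    rw [hcast, hg, ← hδdef]
    ring
  -- invariant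
  have key : ∀ m, m ≤ M → g m - 1 < ((counts M p₁ m).1 : ℝ) ∧
      ((counts M p₁ m).1 : ℝ) < g m + 1 := by
    intro m
    induction m with
    | zero =>
      intro _
      simp only [counts, hg]
      push_cast
      constructor <;> nlinarith
    | succ n ih =>
      intro hn1
      have hnM : n < M := hn1
      have ihn := ih hnM.le
      have hnMr : (n:ℝ) + 1 ≤ (M:ℝ) := by exact_mod_cast hnM
      have hεeq : g (n+1) - g n = p₁ - δ*(2*(n:ℝ)+3) := by
        rw [hg]; push_cast; ring
      have hmono : δ * (2*(n:ℝ)+3) ≤ δ * (2*(M:ℝ)+1) := by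
        apply mul_le_mul_of_nonneg_left (by linarith) hδ0
      have hεpos : 0 < p₁ - δ*(2*(n:ℝ)+3) := by nlinarith
      have hεnn : 0 ≤ δ*(2*(n:ℝ)+3) := mul_nonneg hδ0 (by positivity)
      have hεlt : p₁ - δ*(2*(n:ℝ)+3) < 1 := by linarith
      have hQn := hQ n
      by_cases hc : 0 < Qaux M p₁ n (counts M p₁ n).1 (counts M p₁ n).2
      · have hQpos : 0 < Q M p₁ n := hc
        rw [hQn] at hQpos
        have hct : counts M p₁ (n+1) = ((counts M p₁ n).1 + 1, (counts M p₁ n).2) := by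
          rw [counts]; simp [hc]
        rw [hct]
        push_cast
        constructor <;> linarith [ihn.1, ihn.2]
      · have hQneg : ¬ 0 < Q M p₁ n := hc
        rw [hQn] at hQneg
        push_neg at hQneg
        have hct : counts M p₁ (n+1) = ((counts M p₁ n).1, (counts M p₁ n).2 + 1) := by
          rw [counts]; simp [hc]
        rw [hct]
        constructor <;> linarith [ihn.1, ihn.2]
  have hkM := key M le_rfl
  have hgM : g M = (M:ℝ)/2 := by
    rw [hg]
    have : δ * (M:ℝ) * ((M:ℝ)+2) = (p₁ - 0.5) * ((M:ℝ)+2) := by rw [hδM]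
    nlinarith
  rw [hgM] at hkM
  have hNF1 : M < 2 * (counts M p₁ M).1 + 2 := by
    have : (M:ℝ) < 2 * ((counts M p₁ M).1 : ℝ) + 2 := by linarith [hkM.1]
    exact_mod_cast this
  have hNF2 : 2 * (counts M p₁ M).1 < M + 2 := by
    have : 2 * ((counts M p₁ M).1 : ℝ) < (M:ℝ) + 2 := by linarith [hkM.2]
    exact_mod_cast this
  have hsm := hsum M
  unfold NFE NHPO
  simp only [Set.mem_insert_iff, Set.mem_singleton_iff]
  constructor <;> omega
end

section
/- Boundedness Lemma: For every integer m with 0 ≤ m ≤ M, the state function satisfies |Q(m)| < 1. -/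
lemma counts_sum (M : ℕ) (p₁ : ℝ) (m : ℕ) :
    (counts M p₁ m).1 + (counts M p₁ m).2 = m := by
  induction m with
  | zero => simp [counts]
  | succ n ih =>
    have hc : counts M p₁ (n+1) =
        if 0 < Qaux M p₁ n (counts M p₁ n).1 (counts M p₁ n).2 then
          ((counts M p₁ n).1 + 1, (counts M p₁ n).2)
        else ((counts M p₁ n).1, (counts M p₁ n).2 + 1) := rfl
    rw [hc]
    split <;> simp <;> omega

theorem boundedness_lemma (M : ℕ) (hM : 1 ≤ M) (p₁ : ℝ)
    (hp₁ : (0.5 : ℝ) ≤ p₁) (hp₂ : p₁ < ((M : ℝ) + 1.5) / ((M : ℝ) + 3)) :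
    ∀ m : ℕ, m ≤ M → |Q M p₁ m| < 1 := by
  have hMpos : (0:ℝ) < M := by exact_mod_cast hM
  have hp1lt : p₁ < 1 := lt_of_lt_of_le hp₂ (by rw [div_le_one (by linarith)]; linarith)
  have h1 : p₁ * ((M:ℝ)+3) < (M:ℝ)+1.5 := (lt_div_iff₀ (by linarith)).mp hp₂
  set δ := (p₁ - 0.5)/(M:ℝ) with hδdef
  have hδ : 0 ≤ δ := div_nonneg (by linarith) hMpos.le
  intro m
  induction m with
  | zero =>
    intro _
    have hQ0 : Q M p₁ 0 = 2*p₁ - 1 := by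
      simp [Q, Qaux, NFE, NHPO, counts, omegaFE, omegaHPO]; ring
    rw [hQ0, abs_lt]; constructor <;> linarith
  | succ n ih =>
    intro hn
    have hQn := ih (by omega)
    have hkey : δ * (2*(n:ℝ)+3) < p₁ := by
      have hnM : (n:ℝ) + 1 ≤ M := by exact_mod_cast hn
      have h2 : δ * (2*(n:ℝ)+3) ≤ δ * (2*(M:ℝ)+1) :=
        mul_le_mul_of_nonneg_left (by linarith) hδ
      have h3 : δ * (2*(M:ℝ)+1) < p₁ := by
        rw [hδdef, div_mul_eq_mul_div, div_lt_iff₀ hMpos]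
        nlinarith
      linarith
    have hδn : 0 ≤ δ * (2*(n:ℝ)+3) := mul_nonneg hδ (by positivity)
    set a := ((counts M p₁ n).1 : ℝ) with ha
    set b := ((counts M p₁ n).2 : ℝ) with hb
    have hsum : a + b = (n:ℝ) := by
      rw [ha, hb]; exact_mod_cast counts_sum M p₁ n
    have hQndef : Q M p₁ n = (p₁ - δ*(n:ℝ)) * (1 + b) - ((1-p₁) + δ*(n:ℝ)) * (1 + a) := rfl
    have hc : counts M p₁ (n+1) =
        if 0 < Qaux M p₁ n (counts M p₁ n).1 (counts M p₁ n).2 then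
          ((counts M p₁ n).1 + 1, (counts M p₁ n).2)
        else ((counts M p₁ n).1, (counts M p₁ n).2 + 1) := rfl
    have hQQ : Qaux M p₁ n (counts M p₁ n).1 (counts M p₁ n).2 = Q M p₁ n := rfl
    rw [abs_lt] at hQn ⊢
    by_cases h : 0 < Q M p₁ n
    · have hc' : counts M p₁ (n+1) = ((counts M p₁ n).1 + 1, (counts M p₁ n).2) := by
        rw [hc, if_pos (hQQ ▸ h)]
      have hQ1 : Q M p₁ (n+1) =
          (p₁ - δ*((n:ℝ)+1)) * (1 + b) - ((1-p₁) + δ*((n:ℝ)+1)) * (1 + (a+1)) := by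
        simp only [Q, Qaux, NFE, NHPO, hc', omegaFE, omegaHPO]
        push_cast
        rw [ha, hb]
      have hrec : Q M p₁ (n+1) = Q M p₁ n - δ*(2*(n:ℝ)+3) - (1-p₁) := by
        rw [hQ1, hQndef]; linear_combination (-δ) * hsum
      constructor <;> rw [hrec] <;> linarith
    · have hc' : counts M p₁ (n+1) = ((counts M p₁ n).1, (counts M p₁ n).2 + 1) := by
        rw [hc, if_neg (fun hh => h (hQQ ▸ hh))]
      have hQ1 : Q M p₁ (n+1) =
          (p₁ - δ*((n:ℝ)+1)) * (1 + (b+1)) - ((1-p₁) + δ*((n:ℝ)+1)) * (1 + a) := by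
        simp only [Q, Qaux, NFE, NHPO, hc', omegaFE, omegaHPO]
        push_cast
        rw [ha, hb]
      have hrec : Q M p₁ (n+1) = Q M p₁ n + p₁ - δ*(2*(n:ℝ)+3) := by
        rw [hQ1, hQndef]; linear_combination (-δ) * hsum
      push_neg at h
      constructor <;> rw [hrec] <;> linarith
end

section
/- Inductive step, HPO-selection case: for any integer m with 0 ≤ m < M, if |Q(m)| < 1 and Q(m) ≤ 0, then Q(m+1) > Q(m) and Q(m+1) < 1; in particular |Q(m+1)| < 1. -/
theorem inductive_step_HPO (M : ℕ) (hM : 1 ≤ M) (p₁ : ℝ)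
    (hp₁ : (0.5 : ℝ) ≤ p₁) (hp₂ : p₁ < ((M : ℝ) + 1.5) / ((M : ℝ) + 3)) :
    ∀ m : ℕ, m < M → |Q M p₁ m| < 1 → Q M p₁ m ≤ 0 →
      Q M p₁ m < Q M p₁ (m + 1) ∧ Q M p₁ (m + 1) < 1 ∧
      |Q M p₁ (m + 1)| < 1 := by
  intro m hm habs hle
  have hM0 : (0 : ℝ) < M := by exact_mod_cast hM
  set δ : ℝ := (p₁ - 0.5) / (M : ℝ) with hδ
  have hδ0 : 0 ≤ δ := div_nonneg (by linarith) hM0.le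
  -- counts sum
  have hsum : ∀ n : ℕ, (counts M p₁ n).1 + (counts M p₁ n).2 = n := by
    intro n
    induction n with
    | zero => simp [counts]
    | succ k ih =>
      rw [counts]
      split <;> simp <;> omega
  -- not selected FE
  have hnot : ¬ (0 < Qaux M p₁ m (counts M p₁ m).1 (counts M p₁ m).2) := by
    simpa [Q, NFE, NHPO] using not_lt.mpr hle
  have hstep : counts M p₁ (m + 1) = ((counts M p₁ m).1, (counts M p₁ m).2 + 1) := by
    rw [counts]; simp [hnot]
  have hsumR : ((counts M p₁ m).1 : ℝ) + ((counts M p₁ m).2 : ℝ) = (m : ℝ) := by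
    exact_mod_cast hsum m
  have hQstep : Q M p₁ (m + 1) = Q M p₁ m + (p₁ - δ * (2 * (m : ℝ) + 3)) := by
    simp only [Q, NFE, NHPO, hstep, Qaux, omegaFE, omegaHPO]
    push_cast
    linear_combination (-δ) * hsumR
  -- increment is positive
  have hmM : (m : ℝ) + 1 ≤ (M : ℝ) := by exact_mod_cast hm
  have hp₂' : p₁ * ((M : ℝ) + 3) < (M : ℝ) + 1.5 := by
    exact (lt_div_iff₀ (by linarith : (0:ℝ) < (M : ℝ) + 3)).mp hp₂
  have hδeq : δ * (M : ℝ) = p₁ - 0.5 := by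
    rw [hδ, div_mul_cancel₀ _ hM0.ne']
  have hincpos : 0 < p₁ - δ * (2 * (m : ℝ) + 3) := by
    nlinarith [mul_nonneg hδ0 (by linarith : (0:ℝ) ≤ (M : ℝ) - (m : ℝ) - 1)]
  have hp1lt1 : p₁ < 1 := by
    nlinarith
  have hinc1 : p₁ - δ * (2 * (m : ℝ) + 3) < 1 := by
    nlinarith [mul_nonneg hδ0 (by positivity : (0:ℝ) ≤ 2 * (m : ℝ) + 3)]
  have habs' := abs_lt.mp habs
  refine ⟨by linarith [hQstep], by linarith [hQstep], ?_⟩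
  rw [abs_lt]
  constructor <;> linarith [hQstep, habs'.1, habs'.2]
end

section
/- Even-budget equilibrium: if M is even, then N_FE(M) = N_HPO(M) = M/2. -/
/-- Imbalance `N_FE(m) − N_HPO(m)` as a real number. -/
noncomputable def Sfun (M : ℕ) (p₁ : ℝ) (m : ℕ) : ℝ :=
  ((counts M p₁ m).1 : ℝ) - ((counts M p₁ m).2 : ℝ)

/-- Threshold function `F(m) = 2δ(M−m)(m+2)`. -/
noncomputable def Ffun (M : ℕ) (d : ℝ) (m : ℕ) : ℝ :=
  2 * d * ((M : ℝ) - (m : ℝ)) * ((m : ℝ) + 2)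

theorem even_budget_equilibrium (M : ℕ) (hM : 1 ≤ M) (p₁ : ℝ)
    (hp₁ : (0.5 : ℝ) ≤ p₁) (hp₂ : p₁ < ((M : ℝ) + 1.5) / ((M : ℝ) + 3))
    (hMeven : Even M) :
    NFE M p₁ M = M / 2 ∧ NHPO M p₁ M = M / 2 := by
  have hMR : (0:ℝ) < M := by exact_mod_cast hM
  obtain ⟨d, hd⟩ : ∃ x : ℝ, (p₁ - 0.5) / (M:ℝ) = x := ⟨_, rfl⟩
  have hd0 : 0 ≤ d := hd ▸ div_nonneg (by linarith) hMR.le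
  have hdM : d * M = p₁ - 0.5 := by rw [← hd]; field_simp
  have h2 : p₁ * ((M:ℝ)+3) < (M:ℝ)+1.5 := by
    rw [lt_div_iff₀ (by positivity)] at hp₂; linarith
  have hdlt : d * (2*((M:ℝ)+3)) < 1 := by
    rw [← hd, div_mul_eq_mul_div, div_lt_one hMR]; nlinarith
  -- sums of counts
  have hsum : ∀ m, (counts M p₁ m).1 + (counts M p₁ m).2 = m := by
    intro m
    induction m with
    | zero => simp [counts]
    | succ n ih => simp only [counts]; split <;> simp <;> omega
  have hQ : ∀ m, Qaux M p₁ m (counts M p₁ m).1 (counts M p₁ m).2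
      = (Ffun M d m - Sfun M p₁ m)/2 := by
    intro m
    have hcast : ((counts M p₁ m).1 : ℝ) + ((counts M p₁ m).2 : ℝ) = m := by
      exact_mod_cast hsum m
    simp only [Qaux, omegaFE, omegaHPO, Sfun, Ffun, hd]
    linear_combination (d * ((M:ℝ) - m)) * hcast - ((1 + ((counts M p₁ m).2:ℝ))
      + (1 + ((counts M p₁ m).1:ℝ))) * hdM
  -- main invariant
  have hinv : ∀ m, m ≤ M → |Sfun M p₁ m - Ffun M d m| < 2 := by
    intro m
    induction m with
    | zero =>
      intro _
      have h0 : Sfun M p₁ 0 = 0 := by simp [Sfun, counts]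
      have hF0 : Ffun M d 0 = 4 * (d * M) := by simp [Ffun]; ring
      rw [h0, hF0, abs_lt]
      constructor <;> nlinarith [mul_nonneg hd0 hMR.le]
    | succ n ih =>
      intro hn1
      have hn : n ≤ M := by omega
      have h1 := ih hn
      have hmle : (n:ℝ) ≤ M := by exact_mod_cast hn
      have hn0 : (0:ℝ) ≤ (n:ℝ) := Nat.cast_nonneg n
      have hfd : |Ffun M d (n+1) - Ffun M d n| < 1 := by
        have he : Ffun M d (n+1) - Ffun M d n = 2*d*((M:ℝ) - 2*n - 3) := by
          simp only [Ffun]; push_cast; ring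
        rw [he, abs_lt]
        constructor <;>
          nlinarith [mul_nonneg hd0 hn0, mul_nonneg hd0 (by linarith : (0:ℝ) ≤ (M:ℝ) - n)]
      rw [abs_lt] at h1 hfd ⊢
      by_cases hc : 0 < Qaux M p₁ n (counts M p₁ n).1 (counts M p₁ n).2
      · have hSn : Sfun M p₁ (n+1) = Sfun M p₁ n + 1 := by
          simp only [Sfun, counts]; rw [if_pos hc]; push_cast; ring
        rw [hQ n] at hc
        have hlt : Sfun M p₁ n < Ffun M d n := by linarith
        rw [hSn]; constructor <;> linarith
      · have hSn : Sfun M p₁ (n+1) = Sfun M p₁ n - 1 := by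
          simp only [Sfun, counts]; rw [if_neg hc]; push_cast; ring
        rw [hQ n] at hc
        have hge : Ffun M d n ≤ Sfun M p₁ n := by
          have := not_lt.1 hc; linarith
        rw [hSn]; constructor <;> linarith
  have hfin := hinv M le_rfl
  have hFM : Ffun M d M = 0 := by simp [Ffun]
  rw [hFM, sub_zero, abs_lt, Sfun] at hfin
  have hsM := hsum M
  obtain ⟨k, hk⟩ := hMeven
  have hz1 : (-2 : ℤ) < ((counts M p₁ M).1 : ℤ) - ((counts M p₁ M).2 : ℤ) := by
    have : ((-2 : ℤ) : ℝ) < ((((counts M p₁ M).1 : ℤ) - ((counts M p₁ M).2 : ℤ) : ℤ) : ℝ) := by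
      push_cast; linarith [hfin.1]
    exact_mod_cast this
  have hz2 : ((counts M p₁ M).1 : ℤ) - ((counts M p₁ M).2 : ℤ) < 2 := by
    have : ((((counts M p₁ M).1 : ℤ) - ((counts M p₁ M).2 : ℤ) : ℤ) : ℝ) < ((2:ℤ):ℝ) := by
      push_cast; linarith [hfin.2]
    exact_mod_cast this
  constructor <;> · simp only [NFE, NHPO]; omega
end

section
/- Odd-budget equilibrium: if M is odd, then |N_FE(M) − N_HPO(M)| = 1, so the budget splits as {N_FE(M), N_HPO(M)} = {(M−1)/2, (M+1)/2}. -/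
theorem odd_budget_equilibrium (M : ℕ) (hM : 1 ≤ M) (p₁ : ℝ)
    (hp₁ : (0.5 : ℝ) ≤ p₁) (hp₂ : p₁ < ((M : ℝ) + 1.5) / ((M : ℝ) + 3))
    (hModd : Odd M) :
    |(NFE M p₁ M : ℤ) - (NHPO M p₁ M : ℤ)| = 1 ∧
    ({NFE M p₁ M, NHPO M p₁ M} : Set ℕ) = {(M - 1) / 2, (M + 1) / 2} := by

  have hM0 : (0:ℝ) < (M:ℝ) := by exact_mod_cast hM
  set d : ℝ := (p₁ - 0.5) / (M : ℝ) with hd_def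
  have hdM : d * (M:ℝ) = p₁ - 0.5 := by
    rw [hd_def, div_mul_cancel₀ _ hM0.ne']
  have hd0 : 0 ≤ d := by
    apply div_nonneg (by linarith) (le_of_lt hM0)
  have hM3 : (0:ℝ) < (M:ℝ) + 3 := by linarith
  have hdlt : 2 * d * ((M:ℝ) + 3) < 1 := by
    have h1 : p₁ * ((M:ℝ) + 3) < (M:ℝ) + 1.5 := (lt_div_iff₀ hM3).mp hp₂
    nlinarith [hdM, hM0, hM3]
  set g : ℕ → ℝ := fun m => 2 * d * ((M:ℝ) - (m:ℝ)) * ((m:ℝ) + 2) with hg_def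
  -- key invariant
  have key : ∀ m, m ≤ M →
      (counts M p₁ m).1 + (counts M p₁ m).2 = m ∧
      |((counts M p₁ m).1 : ℝ) - ((counts M p₁ m).2 : ℝ) - g m| < 2 := by
    intro m
    induction m with
    | zero =>
      intro _
      constructor
      · simp [counts]
      · simp only [counts, hg_def]
        rw [abs_lt]
        constructor <;> push_cast <;> nlinarith
    | succ n ih =>
      intro hn1
      have hnM : n ≤ M := Nat.le_of_succ_le hn1
      obtain ⟨hsum, hinv⟩ := ih hnM
      set NF := (counts M p₁ n).1 with hNF
      set NH := (counts M p₁ n).2 with hNH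
      have hnMr : (n:ℝ) + 1 ≤ (M:ℝ) := by exact_mod_cast hn1
      have hsumr : (NF:ℝ) + (NH:ℝ) = (n:ℝ) := by exact_mod_cast hsum
      -- Q identity
      have hQ : Qaux M p₁ n NF NH = (g n - ((NF:ℝ) - (NH:ℝ))) / 2 := by
        simp only [Qaux, omegaFE, omegaHPO, hg_def, ← hd_def]
        have hp1 : p₁ = 0.5 + d * (M:ℝ) := by linarith [hdM]
        rw [hp1]
        linear_combination (d * ((M:ℝ) - (n:ℝ))) * hsumr
      -- delta g bound
      have hdg : |g (n+1) - g n| < 1 := by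
        have : g (n+1) - g n = 2 * d * ((M:ℝ) - 2*(n:ℝ) - 3) := by
          simp only [hg_def]; push_cast; ring
        rw [this, abs_lt]
        have hn0 : (0:ℝ) ≤ (n:ℝ) := Nat.cast_nonneg n
        constructor <;> nlinarith
      have hinv' := abs_lt.mp hinv
      have hdg' := abs_lt.mp hdg
      rw [counts]
      simp only [← hNF, ← hNH]
      by_cases hq : 0 < Qaux M p₁ n NF NH
      · rw [if_pos hq]
        have hDlt : (NF:ℝ) - (NH:ℝ) < g n := by
          rw [hQ] at hq; linarith
        refine ⟨by omega, ?_⟩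
        rw [abs_lt]; push_cast
        constructor <;> linarith
      · rw [if_neg hq]
        push_neg at hq
        have hDge : g n ≤ (NF:ℝ) - (NH:ℝ) := by
          rw [hQ] at hq; linarith
        refine ⟨by omega, ?_⟩
        rw [abs_lt]; push_cast
        constructor <;> linarith
  have hsum : NFE M p₁ M + NHPO M p₁ M = M := (key M le_rfl).1
  have hinv : |(NFE M p₁ M : ℝ) - (NHPO M p₁ M : ℝ) - g M| < 2 := (key M le_rfl).2
  have hgM : g M = 0 := by simp [hg_def]
  rw [hgM, sub_zero] at hinv
  set NF := NFE M p₁ M with hNF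
  set NH := NHPO M p₁ M with hNH
  have h2 : |(NF:ℤ) - (NH:ℤ)| < 2 := by
    have h : |(((NF:ℤ) - (NH:ℤ) : ℤ) : ℝ)| < 2 := by push_cast; exact hinv
    exact_mod_cast h
  obtain ⟨k, hk⟩ := hModd
  have hz : (NF:ℤ) - (NH:ℤ) = 1 ∨ (NF:ℤ) - (NH:ℤ) = -1 := by
    have := abs_lt.mp h2
    omega
  have habs : |(NF:ℤ) - (NH:ℤ)| = 1 := by rcases hz with h | h <;> simp [h]
  refine ⟨habs, ?_⟩
  have h1 : (M - 1) / 2 = k := by omega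
  have h2' : (M + 1) / 2 = k + 1 := by omega
  rw [h1, h2']
  rcases hz with h | h
  · have hh : NF = k + 1 ∧ NH = k := by omega
    rw [hh.1, hh.2, Set.pair_comm]
  · have hh : NF = k ∧ NH = k + 1 := by omega
    rw [hh.1, hh.2]
end
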